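/- Suppose f is convex and let x : [0, ∞) → F be a C¹ solution of the steepest descent equation ẋ(t) = −∇²h(x(t))⁻¹[I − Aᵀ(A∇²h(x(t))⁻¹Aᵀ)⁻¹A∇²h(x(t))⁻¹]∇f(x(t)) with x(0) = x⁰ ∈ F. Then for every a ∈ F and every t > 0, f(x(t)) ≤ f(a) + D_h(a, x⁰)/t, and consequently lim_{t→∞} f(x(t)) = inf_{cl F} f. -/

import Mathlib

/-!
Fix `a ∈ F`. Since `a - x(t) ∈ ker A` and `∇²h(x) ẋ + ∇f(x)` is orthogonal to `ker A`,
`d/dt D_h(a, x(t)) = -⟨∇²h(x) ẋ, a - x⟩ = ⟨∇f(x), a - x⟩ ≤ f(a) - f(x)` by convexity of `f`;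
moreover `⟨∇f(x), ẋ⟩ ≤ 0`. Hence `t (f(x(t)) - f(a)) + D_h(a, x(t))` is nonincreasing, and
`D_h ≥ 0` gives the bound. Letting `t → ∞` and approximating points of `cl F` by points of `F`
(where `f` is continuous) gives the limit of the values.
-/

noncomputable section
open Set Filter Topology Matrix MeasureTheory

abbrev E (n : ℕ) := EuclideanSpace ℝ (Fin n)

/-- Action of a matrix on a vector of `EuclideanSpace ℝ (Fin n)`. -/
def matVec {n : ℕ} (M : Matrix (Fin n) (Fin n) ℝ) (v : E n) : E n := WithLp.toLp 2 (M.mulVec v)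

/-- The continuous linear map on Euclidean space associated with a matrix. -/
def matCLM {n : ℕ} (M : Matrix (Fin n) (Fin n) ℝ) : E n →L[ℝ] E n :=
  LinearMap.toContinuousLinearMap (Matrix.toEuclideanLin M)

/-- The steepest descent vector field
`x ↦ −H(x)⁻¹[I − Aᵀ(A H(x)⁻¹ Aᵀ)⁻¹ A H(x)⁻¹] g(x)` for the Hessian metric. -/
def sdVF {n m : ℕ} (A : Matrix (Fin m) (Fin n) ℝ)
    (Hess : E n → Matrix (Fin n) (Fin n) ℝ) (g : E n → E n) (x : E n) : E n :=
  -(matVec ((Hess x)⁻¹ * (1 - Aᵀ * (A * (Hess x)⁻¹ * Aᵀ)⁻¹ * A * (Hess x)⁻¹)) (g x))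

/-- The `D`-function (Bregman distance) of `h`: `D_h(a,y) = h(a) − h(y) − ⟨∇h(y), a − y⟩`. -/
def Dh {n : ℕ} (h : E n → ℝ) (a y : E n) : ℝ :=
  h a - h y - (inner ℝ (gradient h y) (a - y) : ℝ)

namespace Matrix

variable {ι κ : Type*} [Fintype ι] [Fintype κ]

lemma vecMul_injective_of_rank_eq_card {A : Matrix κ ι ℝ} (hA : A.rank = Fintype.card κ) :
    Function.Injective A.vecMul := by
  rw [vecMul_injective_iff, linearIndependent_iff_card_eq_finrank_span]
  exact hA.symm.trans A.rank_eq_finrank_span_row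

variable [DecidableEq ι] [DecidableEq κ]

/-- `projectedInverse A H *ᵥ g` represents the linear form `⟨g, ·⟩` restricted to `ker A`, with
respect to the inner product `⟨H ·, ·⟩` on `ker A`. -/
def projectedInverse (A : Matrix κ ι ℝ) (H : Matrix ι ι ℝ) : Matrix ι ι ℝ :=
  H⁻¹ * (1 - Aᵀ * (A * H⁻¹ * Aᵀ)⁻¹ * A * H⁻¹)

lemma mul_projectedInverse {A : Matrix κ ι ℝ} (hA : Function.Injective A.vecMul)
    {H : Matrix ι ι ℝ} (hH : H.PosDef) : A * projectedInverse A H = 0 := by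
  have hW : IsUnit (A * H⁻¹ * Aᵀ).det := by
    rw [← isUnit_iff_isUnit_det]
    simpa [conjTranspose_eq_transpose_of_trivial] using
      (hH.inv.mul_mul_conjTranspose_same hA).isUnit
  have key : A * H⁻¹ * Aᵀ * (A * H⁻¹ * Aᵀ)⁻¹ = 1 := mul_nonsing_inv _ hW
  calc A * projectedInverse A H
      = A * H⁻¹ - (A * H⁻¹ * Aᵀ * (A * H⁻¹ * Aᵀ)⁻¹) * (A * H⁻¹) := by
        simp only [projectedInverse, Matrix.mul_sub, Matrix.mul_one, Matrix.mul_assoc]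
    _ = 0 := by rw [key, Matrix.one_mul, sub_self]

lemma mulVec_projectedInverse_dotProduct {A : Matrix κ ι ℝ} {H : Matrix ι ι ℝ}
    (hH : IsUnit H.det) (g : ι → ℝ) {w : ι → ℝ} (hw : A *ᵥ w = 0) :
    (H *ᵥ (projectedInverse A H *ᵥ g)) ⬝ᵥ w = g ⬝ᵥ w := by
  have hHP : H * projectedInverse A H = 1 - Aᵀ * ((A * H⁻¹ * Aᵀ)⁻¹ * A * H⁻¹) := by
    rw [projectedInverse, ← Matrix.mul_assoc, mul_nonsing_inv _ hH, Matrix.one_mul]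
    simp only [Matrix.mul_assoc]
  rw [mulVec_mulVec, hHP, sub_mulVec, one_mulVec, sub_dotProduct, ← mulVec_mulVec,
    mulVec_transpose, ← dotProduct_mulVec, hw, dotProduct_zero, sub_zero]

lemma dotProduct_mulVec_projectedInverse_nonneg {A : Matrix κ ι ℝ}
    (hA : Function.Injective A.vecMul) {H : Matrix ι ι ℝ} (hH : H.PosDef) (g : ι → ℝ) :
    0 ≤ g ⬝ᵥ (projectedInverse A H *ᵥ g) := by
  set p := projectedInverse A H *ᵥ g
  have hp : A *ᵥ p = 0 := by rw [mulVec_mulVec, mul_projectedInverse hA hH, zero_mulVec]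
  rw [← mulVec_projectedInverse_dotProduct ((isUnit_iff_isUnit_det H).1 hH.isUnit) g hp,
    dotProduct_comm]
  simpa only [star_trivial] using hH.posSemidef.dotProduct_mulVec_nonneg p

end Matrix

theorem ConvexOn.inner_gradient_le_sub {F : Type*} [NormedAddCommGroup F] [InnerProductSpace ℝ F]
    [CompleteSpace F] {s : Set F} {g : F → ℝ} (hg : ConvexOn ℝ s g) {p q : F} (hp : p ∈ s)
    (hq : q ∈ s) {g' : F} (hd : HasGradientAt g g' p) : inner ℝ g' (q - p) ≤ g q - g p := by
  set ℓ : ℝ →ᵃ[ℝ] F := AffineMap.lineMap p q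
  have hd₀ : HasFDerivAt g (InnerProductSpace.toDual ℝ F g') (ℓ 0) := by
    simpa [ℓ] using hd.hasFDerivAt
  have hd' : HasDerivAt (g ∘ ℓ) (inner ℝ g' (q - p)) 0 := by
    simpa using hd₀.comp_hasDerivAt (0 : ℝ) AffineMap.hasDerivAt_lineMap
  simpa [slope, ℓ] using (hg.comp_affineMap ℓ).le_slope_of_hasDerivAt
    (by simpa [ℓ] using hp) (by simpa [ℓ] using hq) zero_lt_one hd'

theorem tendsto_iInf_closure_of_le_add_div {X : Type*} [TopologicalSpace X] {f : X → ℝ}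
    (hf : Continuous f) {S : Set X} {u : ℝ → X} (hu : ∀ᶠ t in atTop, u t ∈ S)
    (hbound : ∀ a ∈ S, ∃ c : ℝ, ∀ t > 0, f (u t) ≤ f a + c / t) :
    Tendsto (fun t => (f (u t) : EReal)) atTop (𝓝 (⨅ z ∈ closure S, (f z : EReal))) := by
  refine tendsto_order.2 ⟨fun c hc => ?_, fun c hc => ?_⟩
  · filter_upwards [hu] with t ht
    exact hc.trans_le (iInf₂_le (u t) (subset_closure ht))
  · obtain ⟨z, hz, hzc⟩ : ∃ z ∈ closure S, (f z : EReal) < c := by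
      simpa only [iInf_lt_iff, exists_prop] using hc
    obtain ⟨r, hzr, hrc⟩ := EReal.lt_iff_exists_real_btwn.1 hzc
    obtain ⟨a, har, haS⟩ : (f ⁻¹' Iio r ∩ S).Nonempty :=
      mem_closure_iff.1 hz _ (isOpen_Iio.preimage hf) (EReal.coe_lt_coe_iff.1 hzr)
    obtain ⟨k, hk⟩ := hbound a haS
    have hlim : Tendsto (fun t : ℝ => f a + k / t) atTop (𝓝 (f a)) := by
      simpa using tendsto_const_nhds.add
        ((tendsto_const_nhds (x := k)).div_atTop (tendsto_id (α := ℝ)))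
    filter_upwards [hlim.eventually_lt_const har, eventually_gt_atTop 0] with t htr ht
    exact (EReal.coe_lt_coe_iff.2 ((hk t ht).trans_lt htr)).trans hrc

section SteepestDescent

variable {n m : ℕ}

lemma real_inner_eq_dotProduct (v w : E n) : inner ℝ v w = v.ofLp ⬝ᵥ w.ofLp := by
  rw [EuclideanSpace.inner_eq_star_dotProduct, dotProduct_comm]; rfl

lemma sdVF_eq_neg_matVec (A : Matrix (Fin m) (Fin n) ℝ) (Hess : E n → Matrix (Fin n) (Fin n) ℝ)
    (g : E n → E n) (y : E n) :
    sdVF A Hess g y = -matVec (projectedInverse A (Hess y)) (g y) := rfl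

lemma inner_sdVF_nonpos {A : Matrix (Fin m) (Fin n) ℝ} (hA : Function.Injective A.vecMul)
    {Hess : E n → Matrix (Fin n) (Fin n) ℝ} {y : E n} (hH : (Hess y).PosDef) (g : E n → E n) :
    inner ℝ (g y) (sdVF A Hess g y) ≤ 0 := by
  rw [sdVF_eq_neg_matVec, inner_neg_right, real_inner_eq_dotProduct, neg_nonpos]
  exact dotProduct_mulVec_projectedInverse_nonneg hA hH _

lemma inner_matCLM_sdVF {A : Matrix (Fin m) (Fin n) ℝ} {Hess : E n → Matrix (Fin n) (Fin n) ℝ}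
    {y : E n} (hH : IsUnit (Hess y).det) (g : E n → E n) {w : E n} (hw : A *ᵥ w = 0) :
    inner ℝ (matCLM (Hess y) (sdVF A Hess g y)) w = -inner ℝ (g y) w := by
  rw [sdVF_eq_neg_matVec, map_neg, inner_neg_left, real_inner_eq_dotProduct,
    real_inner_eq_dotProduct]
  exact congrArg Neg.neg (mulVec_projectedInverse_dotProduct hH _ hw)

lemma Dh_nonneg {h : E n → ℝ} {C : Set (E n)} (hh : ConvexOn ℝ C h) {a y : E n} (ha : a ∈ C)
    (hy : y ∈ C) (hd : DifferentiableAt ℝ h y) : 0 ≤ Dh h a y := by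
  have := hh.inner_gradient_le_sub hy ha hd.hasGradientAt
  rw [Dh]
  linarith

lemma hasDerivAt_Dh_comp {h : E n → ℝ} {L : E n →L[ℝ] E n} {γ : ℝ → E n} {v : E n} {s : ℝ}
    (a : E n) (hh : DifferentiableAt ℝ h (γ s)) (hgrad : HasFDerivAt (gradient h) L (γ s))
    (hγ : HasDerivAt γ v s) :
    HasDerivAt (fun τ => Dh h a (γ τ)) (-inner ℝ (L v) (a - γ s)) s := by
  have hhγ : HasDerivAt (fun τ => h (γ τ)) (inner ℝ (gradient h (γ s)) v) s := by
    have := hh.hasGradientAt.hasFDerivAt.comp_hasDerivAt s hγ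
    rwa [InnerProductSpace.toDual_apply_apply] at this
  have hinner := (hgrad.comp_hasDerivAt s hγ).inner ℝ (hγ.const_sub a)
  refine ((hhγ.const_sub (h a)).sub hinner).congr_deriv ?_
  rw [inner_neg_right, Function.comp_apply]
  ring

theorem antitoneOn_lyapunov {A : Matrix (Fin m) (Fin n) ℝ} (hA : Function.Injective A.vecMul)
    {b : Fin m → ℝ} {C : Set (E n)} {h f : E n → ℝ} {Hess : E n → Matrix (Fin n) (Fin n) ℝ}
    (hh : ∀ y ∈ C, DifferentiableAt ℝ h y)
    (hHess : ∀ y ∈ C, HasFDerivAt (gradient h) (matCLM (Hess y)) y)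
    (hHpos : ∀ y ∈ C, (Hess y).PosDef) (hfconv : ConvexOn ℝ univ f) (hf : Differentiable ℝ f)
    {x : ℝ → E n} (hmem : ∀ t ∈ Ici (0:ℝ), x t ∈ C ∩ {z | A.mulVec z = b})
    (hode : ∀ t ∈ Ici (0:ℝ), HasDerivAt x (sdVF A Hess (gradient f) (x t)) t)
    {a : E n} (ha : A *ᵥ a = b) :
    AntitoneOn (fun s => s * (f (x s) - f a) + Dh h a (x s)) (Ici 0) := by
  set v := fun s => sdVF A Hess (gradient f) (x s)
  have hG : ∀ s ∈ Ici (0:ℝ), HasDerivAt (fun s => s * (f (x s) - f a) + Dh h a (x s))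
      (f (x s) - f a + s * inner ℝ (gradient f (x s)) (v s)
        - inner ℝ (matCLM (Hess (x s)) (v s)) (a - x s)) s := by
    intro s hs
    have hfx : HasDerivAt (fun τ => f (x τ)) (inner ℝ (gradient f (x s)) (v s)) s := by
      have := (hf (x s)).hasGradientAt.hasFDerivAt.comp_hasDerivAt s (hode s hs)
      rwa [InnerProductSpace.toDual_apply_apply] at this
    have hDh := hasDerivAt_Dh_comp a (hh _ (hmem s hs).1) (hHess _ (hmem s hs).1) (hode s hs)
    refine (((hasDerivAt_id s).mul (hfx.sub_const (f a))).add hDh).congr_deriv ?_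
    simp only [id, one_mul]
    ring
  refine antitoneOn_of_hasDerivWithinAt_nonpos (convex_Ici 0)
    (fun s hs => (hG s hs).continuousAt.continuousWithinAt)
    (fun s hs => (hG s (interior_subset hs)).hasDerivWithinAt) fun s hs => ?_
  replace hs : 0 < s := by simpa using hs
  obtain ⟨hxC, hxA⟩ := hmem s hs.le
  have hdescent : s * inner ℝ (gradient f (x s)) (v s) ≤ 0 :=
    mul_nonpos_of_nonneg_of_nonpos hs.le (inner_sdVF_nonpos hA (hHpos _ hxC) _)
  have hker : A *ᵥ (a - x s).ofLp = 0 := by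
    rw [WithLp.ofLp_sub, mulVec_sub, ha, hxA, sub_self]
  have hmetric : inner ℝ (matCLM (Hess (x s)) (v s)) (a - x s)
      = -inner ℝ (gradient f (x s)) (a - x s) :=
    inner_matCLM_sdVF ((isUnit_iff_isUnit_det _).1 (hHpos _ hxC).isUnit) _ hker
  have hconv :=
    hfconv.inner_gradient_le_sub (mem_univ (x s)) (mem_univ a) (hf (x s)).hasGradientAt
  linarith

theorem le_add_Dh_div_of_sdVF {A : Matrix (Fin m) (Fin n) ℝ} (hA : Function.Injective A.vecMul)
    {b : Fin m → ℝ} {C : Set (E n)} {h f : E n → ℝ} {Hess : E n → Matrix (Fin n) (Fin n) ℝ}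
    (hh : ∀ y ∈ C, DifferentiableAt ℝ h y) (hhconv : ConvexOn ℝ C h)
    (hHess : ∀ y ∈ C, HasFDerivAt (gradient h) (matCLM (Hess y)) y)
    (hHpos : ∀ y ∈ C, (Hess y).PosDef) (hfconv : ConvexOn ℝ univ f) (hf : Differentiable ℝ f)
    {x : ℝ → E n} (hmem : ∀ t ∈ Ici (0:ℝ), x t ∈ C ∩ {z | A.mulVec z = b})
    (hode : ∀ t ∈ Ici (0:ℝ), HasDerivAt x (sdVF A Hess (gradient f) (x t)) t)
    {a : E n} (ha : a ∈ C ∩ {z | A.mulVec z = b}) {t : ℝ} (ht : 0 < t) :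
    f (x t) ≤ f a + Dh h a (x 0) / t := by
  have hmono := antitoneOn_lyapunov hA hh hHess hHpos hfconv hf hmem hode ha.2
    self_mem_Ici ht.le ht.le
  have hDh := Dh_nonneg hhconv ha.1 (hmem t ht.le).1 (hh _ (hmem t ht.le).1)
  simp only [zero_mul, zero_add] at hmono
  rw [← sub_le_iff_le_add', le_div_iff₀ ht]
  linarith

end SteepestDescent

theorem stmt9_general
    -- problem data: a full rank `m×n` matrix `A` (`m < n`), `b ∈ ℝᵐ`
    {n m : ℕ}
    (A : Matrix (Fin m) (Fin n) ℝ) (b : Fin m → ℝ) (hrank : A.rank = m)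
    -- `C` is a nonempty open convex set, `F = C ∩ {x | Ax = b}` is nonempty
    (C : Set (E n)) (hCopen : IsOpen C)
    (h : E n → ℝ) (Hess : E n → Matrix (Fin n) (Fin n) ℝ)
    -- `(H₀)`: `h` is of Legendre type with `int dom h = C`: it is strictly convex on `C`,
    -- `C²` on `C`, and its gradient blows up at the boundary of `C`;
    -- its Hessian `Hess` is positive definite and locally Lipschitz on `C`
    (hhC2 : ContDiffOn ℝ 2 h C) (hhconv : ConvexOn ℝ C h)
    (hHess : ∀ x ∈ C, HasFDerivAt (gradient h) (matCLM (Hess x)) x)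
    (hHpos : ∀ x ∈ C, (Hess x).PosDef)
    -- `f` is convex and `C¹` with locally Lipschitz gradient
    (f : E n → ℝ) (hfconv : ConvexOn ℝ univ f) (hf : ContDiff ℝ 1 f)
    -- the global trajectory
    (x : ℝ → E n) (x0 : E n) (hx0 : x 0 = x0)
    (hmem : ∀ t ∈ Ici (0:ℝ), x t ∈ C ∩ {z | A.mulVec z = b})
    (hode : ∀ t ∈ Ici (0:ℝ), HasDerivAt x (sdVF A Hess (gradient f) (x t)) t) :
    (∀ a ∈ C ∩ {z | A.mulVec z = b}, ∀ t : ℝ, 0 < t →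
      f (x t) ≤ f a + Dh h a x0 / t) ∧
    Tendsto (fun t => (f (x t) : EReal)) atTop
      (𝓝 (⨅ z ∈ closure (C ∩ {z | A.mulVec z = b}), (f z : EReal))) := by
  have hA : Function.Injective A.vecMul :=
    vecMul_injective_of_rank_eq_card (by rwa [Fintype.card_fin])
  have hh : ∀ y ∈ C, DifferentiableAt ℝ h y := fun y hy =>
    (hhC2.differentiableOn two_ne_zero).differentiableAt (hCopen.mem_nhds hy)
  have hbound : ∀ a ∈ C ∩ {z | A.mulVec z = b}, ∀ t : ℝ, 0 < t →
      f (x t) ≤ f a + Dh h a x0 / t := fun a ha t ht => hx0 ▸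
    le_add_Dh_div_of_sdVF hA hh hhconv hHess hHpos hfconv (hf.differentiable one_ne_zero)
      hmem hode ha ht
  refine ⟨hbound, tendsto_iInf_closure_of_le_add_div hf.continuous ?_
    fun a ha => ⟨_, hbound a ha⟩⟩
  filter_upwards [eventually_ge_atTop 0] with t ht using hmem t ht

/-- value convergence for a convex objective.  If `f` is convex and
`x : [0,∞) → F` is a `C¹` solution of the steepest descent equation with `x(0)=x⁰ ∈ F`,
then `f(x(t)) ≤ f(a) + D_h(a,x⁰)/t` for all `a ∈ F` and `t > 0`, and consequently
`f(x(t)) → inf_{cl F} f` as `t → ∞`. -/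
theorem stmt9
    -- problem data: a full rank `m×n` matrix `A` (`m < n`), `b ∈ ℝᵐ`
    {n m : ℕ} (hm : 0 < m) (hmn : m < n)
    (A : Matrix (Fin m) (Fin n) ℝ) (b : Fin m → ℝ) (hrank : A.rank = m)
    -- `C` is a nonempty open convex set, `F = C ∩ {x | Ax = b}` is nonempty
    (C : Set (E n)) (hCopen : IsOpen C) (hCconv : Convex ℝ C) (hCne : C.Nonempty)
    (hFne : (C ∩ {x | A.mulVec x = b}).Nonempty)
    (h : E n → ℝ) (Hess : E n → Matrix (Fin n) (Fin n) ℝ)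
    -- `(H₀)`: `h` is of Legendre type with `int dom h = C`: it is strictly convex on `C`,
    -- `C²` on `C`, and its gradient blows up at the boundary of `C`;
    -- its Hessian `Hess` is positive definite and locally Lipschitz on `C`
    (hhC2 : ContDiffOn ℝ 2 h C) (hhconv : ConvexOn ℝ C h) (hhstrict : StrictConvexOn ℝ C h)
    (hLeg : ∀ (z : ℕ → E n) (x' : E n), (∀ j, z j ∈ C) → x' ∈ frontier C →
      Tendsto z atTop (𝓝 x') → Tendsto (fun j => ‖gradient h (z j)‖) atTop atTop)
    (hHess : ∀ x ∈ C, HasFDerivAt (gradient h) (matCLM (Hess x)) x)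
    (hHpos : ∀ x ∈ C, (Hess x).PosDef)
    (hHlip : ∀ x ∈ C, ∃ ε > 0, ∃ K : ℝ, ∀ y ∈ C ∩ Metric.ball x ε, ∀ z ∈ C ∩ Metric.ball x ε,
      ‖matCLM (Hess y) - matCLM (Hess z)‖ ≤ K * ‖y - z‖)
    -- `f` is convex and `C¹` with locally Lipschitz gradient
    (f : E n → ℝ) (hfconv : ConvexOn ℝ univ f) (hf : ContDiff ℝ 1 f)
    (hfgrad : ∀ x : E n, ∃ ε > 0, ∃ K : ℝ, ∀ y ∈ Metric.ball x ε, ∀ z ∈ Metric.ball x ε,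
      ‖gradient f y - gradient f z‖ ≤ K * ‖y - z‖)
    -- the global trajectory
    (x : ℝ → E n) (x0 : E n) (hx0 : x 0 = x0) (hx0F : x0 ∈ C ∩ {z | A.mulVec z = b})
    (hmem : ∀ t ∈ Ici (0:ℝ), x t ∈ C ∩ {z | A.mulVec z = b})
    (hode : ∀ t ∈ Ici (0:ℝ), HasDerivAt x (sdVF A Hess (gradient f) (x t)) t) :
    (∀ a ∈ C ∩ {z | A.mulVec z = b}, ∀ t : ℝ, 0 < t →
      f (x t) ≤ f a + Dh h a x0 / t) ∧
    Tendsto (fun t => (f (x t) : EReal)) atTop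
      (𝓝 (⨅ z ∈ closure (C ∩ {z | A.mulVec z = b}), (f z : EReal))) :=
  stmt9_general A b hrank C hCopen h Hess hhC2 hhconv hHess hHpos f hfconv hf x x0 hx0 hmem hode
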